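/- arXiv:2109.10537 — 4 statements merged into one kernel-verified Lean document; each statement's English description precedes it below -/
import Mathlib

section
/- Let $A$ be an algebra over a field with elements $t_{ij}$ ($1 \le i,j \le n$) satisfying: $t_{ij}t_{kj} = q\,t_{kj}t_{ij}$ and $t_{ij}t_{il} = q\,t_{il}t_{ij}$ for $i<k$, $j<l$; $t_{il}t_{kj} = t_{kj}t_{il}$ for $i<k$, $j<l$; and $t_{ij}t_{kl} = t_{kl}t_{ij} + (q-q^{-1})t_{il}t_{kj}$ for $i<k$, $j<l$. Then for any matrix $A=(a_{ij})$ of natural numbers, the ordered monomial $t^{(A)} = \prod_{(i,j)}^{<} t_{ij}^{a_{ij}}$ taken in lexicographic order on $(i,j)$ equals the ordered monomial $t'^{(A)} = \prod_{(i,j)}^{<'} t_{ij}^{a_{ij}}$ taken in the reversed lexicographic order $(i,j) <' (k,l) \iff j<l$ or ($j=l$ and $i<k$). -/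
private lemma aux_zip {A : Type} [Ring A] {κ : Type} (u v : κ → A) :
    ∀ (J : List κ), J.Pairwise (fun l j => Commute (u j) (v l)) →
      (J.map u).prod * (J.map v).prod = (J.map (fun j => u j * v j)).prod := by
  intro J
  induction J with
  | nil => simp
  | cons j J ih =>
    intro h
    rw [List.pairwise_cons] at h
    have hcomm : Commute (v j) ((J.map u).prod) := by
      apply Commute.list_prod_right
      intro y hy
      rcases List.mem_map.mp hy with ⟨l, hl, rfl⟩
      exact (h.1 l hl).symm
    simp only [List.map_cons, List.prod_cons]
    rw [mul_assoc, ← mul_assoc ((J.map u).prod), ← hcomm.eq,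
      mul_assoc (v j), ← mul_assoc (u j), ih h.2]

private lemma aux_exchange {A : Type} [Ring A] {ι κ : Type} (f : ι → κ → A)
    (r : ι → ι → Prop) (s : κ → κ → Prop)
    (comm : ∀ i k j l, r i k → s l j → Commute (f i j) (f k l)) :
    ∀ (I : List ι) (J : List κ), I.Pairwise r → J.Pairwise s →
      (I.map (fun i => (J.map (fun j => f i j)).prod)).prod
        = (J.map (fun j => (I.map (fun i => f i j)).prod)).prod := by
  intro I
  induction I with
  | nil => intro J _ _; simp
  | cons i I ih =>
    intro J hI hJ
    rw [List.pairwise_cons] at hI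
    simp only [List.map_cons, List.prod_cons]
    rw [ih J hI.2 hJ]
    rw [aux_zip (fun j => f i j) (fun j => (I.map (fun i' => f i' j)).prod) J]
    · refine hJ.imp_of_mem ?_
      intro l j hl hj hslj
      apply Commute.list_prod_right
      intro y hy
      rcases List.mem_map.mp hy with ⟨k, hk, rfl⟩
      exact comm i k j l (hI.1 k hk) hslj

/-- Quantum matrix relations imply that the lexicographically ordered monomial
`t^(A)` equals the reversed-lexicographically ordered monomial `t'^(A)`. -/
theorem stmt0 {A : Type} [Ring A] (n : ℕ) (q qi : A)
    (hq : q * qi = 1) (hq' : qi * q = 1)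
    (hqc : ∀ x : A, q * x = x * q) (hqic : ∀ x : A, qi * x = x * qi)
    (t : Fin n → Fin n → A) (a : Fin n → Fin n → ℕ)
    (h1 : ∀ i k j : Fin n, i < k → t i j * t k j = q * (t k j * t i j))
    (h2 : ∀ i j l : Fin n, j < l → t i j * t i l = q * (t i l * t i j))
    (h3 : ∀ i k j l : Fin n, i < k → j < l → t i l * t k j = t k j * t i l)
    (h4 : ∀ i k j l : Fin n, i < k → j < l →
      t i j * t k l = t k l * t i j + (q - qi) * (t i l * t k j)) :
    ((List.finRange n).map
        (fun i => ((List.finRange n).map (fun j => t i j ^ a i j)).prod)).prod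
    = ((List.finRange n).map
        (fun j => ((List.finRange n).map (fun i => t i j ^ a i j)).prod)).prod := by
  apply aux_exchange (fun i j => t i j ^ a i j) (· < ·) (· < ·)
  · intro i k j l hik hlj
    exact (show Commute (t i j) (t k l) from h3 i k l j hik hlj).pow_pow _ _
  · exact List.pairwise_lt_finRange n
  · exact List.pairwise_lt_finRange n
end

section
/- Let $H$ be a finite-dimensional semisimple algebra over a field, $T_1, T_2$ finite-dimensional right $H$-modules such that every simple right $H$-module occurring in $T_1$ also occurs in $T_2$ and vice versa. Let $S_1 = \mathrm{End}_H(T_1)$, $S_2 = \mathrm{End}_H(T_2)$, and $T = \mathrm{Hom}_H(T_2, T_1)$. Then the natural maps $S_1 \to \mathrm{End}_{S_2}(T)$ and $S_2^{\mathrm{op}} \to \mathrm{End}_{S_1}(T)$ (acting by postcomposition and precomposition respectively) are algebra isomorphisms. -/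
lemma key (k H : Type) [Field k] [Ring H] [Algebra k H] [IsSemisimpleRing H]
    (A B : Type)
    [AddCommGroup A] [Module H A] [Module k A] [IsScalarTower k H A] [FiniteDimensional k A]
    [AddCommGroup B] [Module H B]
    (hocc : ∀ (L : Type) [AddCommGroup L] [Module H L], IsSimpleModule H L →
      (∃ φ : L →ₗ[H] A, φ ≠ 0) → (∃ φ : L →ₗ[H] B, φ ≠ 0)) :
    ∃ (n : ℕ) (f : Fin n → (B →ₗ[H] A)) (g : Fin n → (A →ₗ[H] B)),
      ∑ i, (f i).comp (g i) = LinearMap.id := by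
  classical
  -- the sup of ranges of all maps B → A is ⊤
  have hN : (⨆ φ : B →ₗ[H] A, LinearMap.range φ) = ⊤ := by
    set N := ⨆ φ : B →ₗ[H] A, LinearMap.range φ with hNdef
    by_contra hne
    obtain ⟨C, hC⟩ := exists_isCompl N
    have hCne : C ≠ ⊥ := by
      rintro rfl
      exact hne (by simpa using hC.codisjoint.eq_top)
    obtain ⟨m, hmC, hm⟩ := (IsSemisimpleModule.eq_bot_or_exists_simple_le C).resolve_left hCne
    have hmne : m ≠ ⊥ := Submodule.nontrivial_iff_ne_bot.mp (IsSimpleModule.nontrivial H m)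
    -- m occurs in A via the inclusion
    have hsub : (m.subtype : m →ₗ[H] A) ≠ 0 := by
      intro h
      apply hmne
      rw [Submodule.eq_bot_iff]
      intro x hx
      have := congrArg (fun φ => φ ⟨x, hx⟩) h
      simpa using this
    obtain ⟨ψ, hψ⟩ := hocc m hm ⟨m.subtype, hsub⟩
    -- ψ is injective since m is simple
    have hker : LinearMap.ker ψ = ⊥ := by
      rcases hm.1.2 (LinearMap.ker ψ) with h | h
      · exact h
      · exact absurd (LinearMap.ker_eq_top.mp h) hψ
    have hinj : Function.Injective ψ := LinearMap.ker_eq_bot.mp hker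
    obtain ⟨q, hq⟩ := exists_isCompl (LinearMap.range ψ)
    set e := LinearEquiv.ofInjective ψ hinj with he
    set θ : B →ₗ[H] A :=
      m.subtype.comp ((e.symm : LinearMap.range ψ →ₗ[H] m).comp
        (Submodule.linearProjOfIsCompl _ q hq)) with hθ
    have hrange : m ≤ LinearMap.range θ := by
      intro x hx
      refine ⟨ψ ⟨x, hx⟩, ?_⟩
      have h1 : Submodule.linearProjOfIsCompl _ q hq (ψ ⟨x, hx⟩)
          = ⟨ψ ⟨x, hx⟩, LinearMap.mem_range_self ψ _⟩ :=
        Submodule.linearProjOfIsCompl_apply_left hq ⟨ψ ⟨x, hx⟩, LinearMap.mem_range_self ψ _⟩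
      have h2 : e.symm ⟨ψ ⟨x, hx⟩, LinearMap.mem_range_self ψ _⟩ = ⟨x, hx⟩ := by
        apply e.injective
        rw [e.apply_symm_apply]
        have h2' : (e ⟨x, hx⟩ : B) = ψ ⟨x, hx⟩ := by simp [he]
        exact Subtype.ext h2'.symm
      simp [hθ, h1, h2]
    have hmN : m ≤ N := le_trans hrange (le_iSup (fun φ : B →ₗ[H] A => LinearMap.range φ) θ)
    exact hmne (le_bot_iff.mp (le_trans (le_inf hmN hmC) hC.disjoint.le_bot))
  -- compactness: finitely many maps suffice
  have hfin : Module.Finite H A := Module.Finite.of_restrictScalars_finite k H A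
  have hcomp : IsCompactElement (⊤ : Submodule H A) :=
    (Submodule.fg_iff_compact _).mp hfin.1
  obtain ⟨s, hs⟩ := CompleteLattice.IsCompactElement.exists_finset_of_le_iSup (Submodule H A) (hk := hcomp) (fun φ : B →ₗ[H] A => LinearMap.range φ) hN.ge
  -- the sum map (↥s → B) → A is surjective
  set π : ((↥s) → B) →ₗ[H] A := ∑ i : ↥s, (i.1).comp (LinearMap.proj i) with hπ
  have hπsurj : LinearMap.range π = ⊤ := by
    rw [eq_top_iff]
    refine le_trans hs (iSup_le fun φ => iSup_le fun hφ => ?_)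
    rintro x ⟨b, rfl⟩
    refine ⟨Pi.single (⟨φ, hφ⟩ : ↥s) b, ?_⟩
    rw [hπ, LinearMap.sum_apply, Finset.sum_eq_single (⟨φ, hφ⟩ : ↥s)]
    · simp
    · intro i _ hi
      simp [LinearMap.proj, Pi.single_eq_of_ne hi]
    · simp
  -- split the surjection
  obtain ⟨q, hq⟩ := exists_isCompl (LinearMap.ker π)
  have hbij : Function.Bijective (π.comp q.subtype) := by
    constructor
    · intro x y hxy
      have : (x : (↥s) → B) - y ∈ LinearMap.ker π ⊓ q := by
        refine Submodule.mem_inf.mpr ⟨?_, q.sub_mem x.2 y.2⟩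
        rw [LinearMap.mem_ker, map_sub]
        simpa [sub_eq_zero] using hxy
      rw [hq.inf_eq_bot] at this
      exact Subtype.ext (sub_eq_zero.mp this)
    · intro a
      obtain ⟨b, hb⟩ : a ∈ LinearMap.range π := hπsurj ▸ Submodule.mem_top
      have hbmem : b ∈ LinearMap.ker π ⊔ q := hq.sup_eq_top ▸ Submodule.mem_top
      obtain ⟨y, hy, z, hz, rfl⟩ := Submodule.mem_sup.mp hbmem
      refine ⟨⟨z, hz⟩, ?_⟩
      have : π y = 0 := hy
      simpa [this] using hb
  set ee := LinearEquiv.ofBijective (π.comp q.subtype) hbij with hee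
  set σ : A →ₗ[H] ((↥s) → B) := q.subtype.comp (ee.symm : A →ₗ[H] q) with hσ
  have hπσ : π.comp σ = LinearMap.id := by
    ext a
    have : (π.comp q.subtype) (ee.symm a) = a := ee.apply_symm_apply a
    simpa [hσ] using this
  set e := Fintype.equivFin ↥s with hedef
  refine ⟨Fintype.card ↥s, fun j => ((e.symm j).1 : B →ₗ[H] A),
    fun j => (LinearMap.proj (e.symm j)).comp σ, ?_⟩
  have hre : ∑ j : Fin (Fintype.card ↥s),
      (((e.symm j).1 : B →ₗ[H] A)).comp ((LinearMap.proj (e.symm j)).comp σ)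
      = ∑ i : ↥s, ((i.1 : B →ₗ[H] A)).comp ((LinearMap.proj i).comp σ) :=
    Equiv.sum_comp e.symm (fun i : ↥s => ((i.1 : B →ₗ[H] A)).comp ((LinearMap.proj i).comp σ))
  have hfinal : (∑ i : ↥s, ((i.1 : B →ₗ[H] A)).comp ((LinearMap.proj i).comp σ)) = π.comp σ := by
    ext a
    simp [hπ, LinearMap.sum_apply]
  rw [hre, hfinal, hπσ]


/-- Double centralizer property: if `H` is a finite-dimensional semisimple algebra and
`T₁`, `T₂` are finite-dimensional `H`-modules with the same simple constituents, then
every endomorphism of `T = Hom_H(T₂,T₁)` commuting with the right `End_H(T₂)`-action is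
post-composition with a unique element of `S₁ = End_H(T₁)`, and every endomorphism
commuting with the left `S₁`-action is pre-composition with a unique element of
`S₂ = End_H(T₂)`; i.e. `S₁ ≅ End_{S₂}(T)` and `S₂ᵒᵖ ≅ End_{S₁}(T)`. -/
theorem stmt3 (k H : Type) [Field k] [Ring H] [Algebra k H]
    [FiniteDimensional k H] [IsSemisimpleRing H]
    (T1 T2 : Type)
    [AddCommGroup T1] [Module H T1] [Module k T1] [IsScalarTower k H T1]
    [SMulCommClass H k T1] [FiniteDimensional k T1]
    [AddCommGroup T2] [Module H T2] [Module k T2] [IsScalarTower k H T2]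
    [SMulCommClass H k T2] [FiniteDimensional k T2]
    (hocc : ∀ (L : Type) [AddCommGroup L] [Module H L], IsSimpleModule H L →
      ((∃ φ : L →ₗ[H] T1, φ ≠ 0) ↔ (∃ φ : L →ₗ[H] T2, φ ≠ 0))) :
    (∀ Φ : (T2 →ₗ[H] T1) →ₗ[k] (T2 →ₗ[H] T1),
      (∀ (s2 : T2 →ₗ[H] T2) (f : T2 →ₗ[H] T1), Φ (f.comp s2) = (Φ f).comp s2) →
      ∃! s1 : T1 →ₗ[H] T1, ∀ f : T2 →ₗ[H] T1, Φ f = s1.comp f)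
    ∧
    (∀ Ψ : (T2 →ₗ[H] T1) →ₗ[k] (T2 →ₗ[H] T1),
      (∀ (s1 : T1 →ₗ[H] T1) (f : T2 →ₗ[H] T1), Ψ (s1.comp f) = s1.comp (Ψ f)) →
      ∃! s2 : T2 →ₗ[H] T2, ∀ f : T2 →ₗ[H] T1, Ψ f = f.comp s2) := by
  constructor
  · intro Φ hΦ
    obtain ⟨n, f, g, hfg⟩ :=
      key k H T1 T2 (fun L _ _ hL => (hocc L hL).mp)
    have hfg' : ∀ a : T1, ∑ i, (f i) ((g i) a) = a := fun a => by
      simpa using LinearMap.congr_fun hfg a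
    refine ⟨∑ i, (Φ (f i)).comp (g i), fun f' => ?_, fun y hy => ?_⟩
    · have harg : ∑ i, (f i).comp ((g i).comp f') = f' := by
        ext x
        simpa using hfg' (f' x)
      calc Φ f' = Φ (∑ i, (f i).comp ((g i).comp f')) := by rw [harg]
        _ = ∑ i, Φ ((f i).comp ((g i).comp f')) := map_sum Φ _ _
        _ = ∑ i, (Φ (f i)).comp ((g i).comp f') :=
            Finset.sum_congr rfl fun i _ => hΦ ((g i).comp f') (f i)
        _ = (∑ i, (Φ (f i)).comp (g i)).comp f' := by ext x; simp
    · ext x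
      have h2 : y x = ∑ i, y ((f i) ((g i) x)) := by
        conv_lhs => rw [← hfg' x]
        rw [map_sum]
      rw [h2, LinearMap.sum_apply]
      refine Finset.sum_congr rfl fun i _ => ?_
      have h3 := LinearMap.congr_fun (hy (f i)) ((g i) x)
      simp only [LinearMap.comp_apply] at h3 ⊢
      exact h3.symm
  · intro Ψ hΨ
    obtain ⟨n, f, g, hfg⟩ :=
      key k H T2 T1 (fun L _ _ hL => (hocc L hL).mpr)
    have hfg' : ∀ a : T2, ∑ i, (f i) ((g i) a) = a := fun a => by
      simpa using LinearMap.congr_fun hfg a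
    refine ⟨∑ i, (f i).comp (Ψ (g i)), fun f' => ?_, fun y hy => ?_⟩
    · have harg : ∑ i, (f'.comp (f i)).comp (g i) = f' := by
        ext x
        have := congrArg f' (hfg' x)
        simpa [map_sum] using this
      calc Ψ f' = Ψ (∑ i, (f'.comp (f i)).comp (g i)) := by rw [harg]
        _ = ∑ i, Ψ ((f'.comp (f i)).comp (g i)) := map_sum Ψ _ _
        _ = ∑ i, (f'.comp (f i)).comp (Ψ (g i)) :=
            Finset.sum_congr rfl fun i _ => hΨ (f'.comp (f i)) (g i)
        _ = f'.comp (∑ i, (f i).comp (Ψ (g i))) := by ext x; simp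
    · ext x
      conv_lhs => rw [← hfg' (y x)]
      rw [LinearMap.sum_apply]
      refine Finset.sum_congr rfl fun i _ => ?_
      have h3 := LinearMap.congr_fun (hy (g i)) x
      simp only [LinearMap.comp_apply] at h3 ⊢
      rw [← h3]
end

section
/- Let $V$ be a $d$-dimensional vector space over a field $F$, and let $G = GL(V)$ act diagonally on pairs of flags $\mathcal{F}_{m,d} \times \mathcal{F}_{n,d}$ ($m$-step flags times $n$-step flags). Two pairs $(\mathfrak{f}, \mathfrak{f}')$ and $(\mathfrak{g}, \mathfrak{g}')$ are in the same $G$-orbit if and only if for all $i, j$: $\dim(V_i \cap V_j') = \dim(W_i \cap W_j')$, where $\mathfrak{f} = (V_i)$, $\mathfrak{f}' = (V_j')$, $\mathfrak{g} = (W_i)$, $\mathfrak{g}' = (W_j')$. Consequently the $G$-orbits on $\mathcal{F}_{m,d} \times \mathcal{F}_{n,d}$ are in bijection with $\Theta_{m|n,d} = \{A \in \mathrm{Mat}_{m\times n}(\mathbb{N}) : \sum_{ij} a_{ij} = d\}$, via $a_{ij} = \dim\frac{V_{i-1} + (V_i \cap V_j')}{V_{i-1} + (V_i \cap V_{j-1}')}$.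 -/
open Module

section FlagAux

variable {F V : Type} [Field F] [AddCommGroup V] [Module F V] [FiniteDimensional F V]

/-- Relative complement of a submodule inside a larger one. -/
lemma aux_compl {A B : Submodule F V} (h : B ≤ A) :
    ∃ U : Submodule F V, U ≤ A ∧ Disjoint B U ∧ B ⊔ U = A := by
  obtain ⟨C, hC⟩ := Submodule.exists_isCompl (B.comap A.subtype)
  refine ⟨C.map A.subtype, Submodule.map_subtype_le A C, ?_, ?_⟩
  · rw [disjoint_iff]
    have hB : B = (B.comap A.subtype).map A.subtype := by
      rw [Submodule.map_comap_subtype, inf_eq_right.mpr h]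
    rw [hB, ← Submodule.map_inf _ (Submodule.injective_subtype A),
      disjoint_iff.mp hC.disjoint, Submodule.map_bot]
  · have : (B.comap A.subtype ⊔ C).map A.subtype = A := by
      rw [hC.sup_eq_top, Submodule.map_top, Submodule.range_subtype]
    conv_rhs => rw [← this]
    rw [Submodule.map_sup, Submodule.map_comap_subtype, inf_eq_right.mpr h]

/-- Telescoping sums along a `Fin`-indexed chain of natural numbers. -/
lemma tele {N : ℕ} (f : Fin (N + 1) → ℕ) (a : Fin N → ℕ)
    (h : ∀ j : Fin N, f j.succ = f j.castSucc + a j) (l : Fin (N + 1)) :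
    f l = f 0 + ∑ j : Fin N, if (j : ℕ) < (l : ℕ) then a j else 0 := by
  induction l using Fin.induction with
  | zero => simp
  | succ l ih =>
    rw [h l, ih]
    have key : ∀ j : Fin N, (if (j : ℕ) < ((l.succ : Fin (N+1)) : ℕ) then a j else 0)
        = (if (j : ℕ) < ((l.castSucc : Fin (N+1)) : ℕ) then a j else 0)
          + (if j = l then a j else 0) := by
      intro j
      have hjl : j = l ↔ (j : ℕ) = (l : ℕ) := ⟨fun h => by rw [h], fun h => Fin.ext h⟩
      simp only [Fin.val_succ, Fin.coe_castSucc]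
      split_ifs with h1 h2 h3 h2 h3 <;>
        first
          | omega
          | (exfalso; rw [hjl] at *; omega)
          | (rw [hjl] at *; omega)
    rw [Finset.sum_congr rfl (fun j _ => key j), Finset.sum_add_distrib,
      Finset.sum_ite_eq' Finset.univ l a]
    simp [add_assoc]

lemma iSupSplit {N : ℕ} (a : Fin N → Submodule F V) (l : Fin N) :
    (⨆ j : Fin N, ⨆ _ : (j : ℕ) < (l : ℕ) + 1, a j)
      = (⨆ j : Fin N, ⨆ _ : (j : ℕ) < (l : ℕ), a j) ⊔ a l := by
  apply le_antisymm
  · refine iSup₂_le fun j hj => ?_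
    rcases Nat.lt_succ_iff_lt_or_eq.mp hj with h | h
    · exact le_sup_of_le_left (le_iSup₂ (f := fun j _ => a j) j h)
    · have : j = l := Fin.ext h
      subst this
      exact le_sup_right
  · refine sup_le (iSup₂_le fun j hj => le_iSup₂ (f := fun j _ => a j) j (by omega)) ?_
    exact le_iSup₂ (f := fun j _ => a j) l (Nat.lt_succ_self _)

/-- Telescoping suprema along a `Fin`-indexed chain of submodules. -/
lemma teleSup {N : ℕ} (f : Fin (N + 1) → Submodule F V) (a : Fin N → Submodule F V)
    (h : ∀ j : Fin N, f j.succ = f j.castSucc ⊔ a j) (l : Fin (N + 1)) :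
    f l = f 0 ⊔ ⨆ j : Fin N, ⨆ _ : (j : ℕ) < (l : ℕ), a j := by
  induction l using Fin.induction with
  | zero => simp
  | succ l ih =>
    rw [h l, ih]
    have : ((l.succ : Fin (N+1)) : ℕ) = (l : ℕ) + 1 := Fin.val_succ l
    rw [this, iSupSplit, sup_assoc]
    rfl

variable {m n : ℕ}

/-- The intersections of two flags decompose via the bigraded pieces `U i j`. -/
lemma master_sup (𝒱 : Fin (m + 1) → Submodule F V) (𝒱' : Fin (n + 1) → Submodule F V)
    (h𝒱 : Monotone 𝒱) (h𝒱' : Monotone 𝒱') (h𝒱0 : 𝒱 0 = ⊥) (h𝒱'0 : 𝒱' 0 = ⊥)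
    (U : Fin m → Fin n → Submodule F V)
    (hU1 : ∀ i j, U i j ≤ 𝒱 i.succ ⊓ 𝒱' j.succ)
    (hU2 : ∀ i j, (𝒱 i.castSucc ⊔ (𝒱 i.succ ⊓ 𝒱' j.castSucc)) ⊔ U i j
        = 𝒱 i.castSucc ⊔ (𝒱 i.succ ⊓ 𝒱' j.succ))
    (k : Fin (m + 1)) (l : Fin (n + 1)) :
    𝒱 k ⊓ 𝒱' l = ⨆ i : Fin m, ⨆ _ : (i : ℕ) < (k : ℕ),
      ⨆ j : Fin n, ⨆ _ : (j : ℕ) < (l : ℕ), U i j := by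
  have key : ∀ (i : Fin m) (l : Fin (n + 1)), 𝒱 i.succ ⊓ 𝒱' l
      = (𝒱 i.castSucc ⊓ 𝒱' l) ⊔ ⨆ j : Fin n, ⨆ _ : (j : ℕ) < (l : ℕ), U i j := by
    intro i l
    induction l using Fin.induction with
    | zero => rw [h𝒱'0]; simp
    | succ l ih =>
      have hXA : 𝒱 i.succ ⊓ 𝒱' l.castSucc ≤ 𝒱 i.succ ⊓ 𝒱' l.succ :=
        inf_le_inf_left _ (h𝒱' (Fin.castSucc_le_succ l))
      have hUA : U i l ≤ 𝒱 i.succ ⊓ 𝒱' l.succ := hU1 i l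
      have h1 : 𝒱 i.succ ⊓ 𝒱' l.succ
          = ((𝒱 i.succ ⊓ 𝒱' l.castSucc) ⊔ U i l ⊔ 𝒱 i.castSucc) ⊓ (𝒱 i.succ ⊓ 𝒱' l.succ) := by
        rw [eq_comm, inf_eq_right]
        calc 𝒱 i.succ ⊓ 𝒱' l.succ ≤ 𝒱 i.castSucc ⊔ (𝒱 i.succ ⊓ 𝒱' l.succ) := le_sup_right
        _ = (𝒱 i.castSucc ⊔ (𝒱 i.succ ⊓ 𝒱' l.castSucc)) ⊔ U i l := (hU2 i l).symm
        _ ≤ _ := by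
            rw [sup_comm (𝒱 i.castSucc) _, sup_assoc, sup_comm (𝒱 i.castSucc) _, ← sup_assoc]
      have h2 : ((𝒱 i.succ ⊓ 𝒱' l.castSucc) ⊔ U i l ⊔ 𝒱 i.castSucc) ⊓ (𝒱 i.succ ⊓ 𝒱' l.succ)
          = ((𝒱 i.succ ⊓ 𝒱' l.castSucc) ⊔ U i l) ⊔ (𝒱 i.castSucc ⊓ (𝒱 i.succ ⊓ 𝒱' l.succ)) :=
        sup_inf_assoc_of_le _ (sup_le hXA hUA)
      have h3 : 𝒱 i.castSucc ⊓ (𝒱 i.succ ⊓ 𝒱' l.succ) = 𝒱 i.castSucc ⊓ 𝒱' l.succ := by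
        rw [← inf_assoc, inf_eq_left.mpr (h𝒱 (Fin.castSucc_le_succ i))]
      have h4 : 𝒱 i.castSucc ⊓ 𝒱' l.castSucc ≤ 𝒱 i.castSucc ⊓ 𝒱' l.succ :=
        inf_le_inf_left _ (h𝒱' (Fin.castSucc_le_succ l))
      rw [h1, h2, h3, ih]
      simp only [Fin.val_succ]
      rw [iSupSplit]
      apply le_antisymm
      · exact sup_le (sup_le (sup_le (h4.trans le_sup_left)
          (le_sup_of_le_right le_sup_left)) (le_sup_of_le_right le_sup_right)) le_sup_left
      · exact sup_le le_sup_right (le_sup_of_le_left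
          (sup_le (le_sup_of_le_left le_sup_right) le_sup_right))
  have := teleSup (fun k => 𝒱 k ⊓ 𝒱' l)
    (fun i => ⨆ j : Fin n, ⨆ _ : (j : ℕ) < (l : ℕ), U i j)
    (fun i => key i l) k
  simpa [h𝒱0] using this

/-- The dimension of the intersections of two flags is determined by the matrix entries. -/
lemma master_dim (𝒱 : Fin (m + 1) → Submodule F V) (𝒱' : Fin (n + 1) → Submodule F V)
    (h𝒱 : Monotone 𝒱) (h𝒱' : Monotone 𝒱') (h𝒱0 : 𝒱 0 = ⊥) (h𝒱'0 : 𝒱' 0 = ⊥)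
    (k : Fin (m + 1)) (l : Fin (n + 1)) :
    finrank F ↥(𝒱 k ⊓ 𝒱' l) = ∑ i : Fin m, if (i : ℕ) < (k : ℕ) then
      (∑ j : Fin n, if (j : ℕ) < (l : ℕ) then
        (finrank F ↥(𝒱 i.castSucc ⊔ (𝒱 i.succ ⊓ 𝒱' j.succ))
          - finrank F ↥(𝒱 i.castSucc ⊔ (𝒱 i.succ ⊓ 𝒱' j.castSucc))) else 0) else 0 := by
  set a : Fin m → Fin n → ℕ := fun i j =>
    finrank F ↥(𝒱 i.castSucc ⊔ (𝒱 i.succ ⊓ 𝒱' j.succ))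
      - finrank F ↥(𝒱 i.castSucc ⊔ (𝒱 i.succ ⊓ 𝒱' j.castSucc)) with ha
  have hDmono : ∀ (i : Fin m), Monotone (fun j : Fin (n+1) => 𝒱 i.castSucc ⊔ (𝒱 i.succ ⊓ 𝒱' j)) :=
    fun i j j' hj => sup_le_sup_left (inf_le_inf_left _ (h𝒱' hj)) _
  have hstep : ∀ (i : Fin m) (l : Fin (n + 1)),
      finrank F ↥(𝒱 i.succ ⊓ 𝒱' l) = finrank F ↥(𝒱 i.castSucc ⊓ 𝒱' l)
        + ∑ j : Fin n, if (j : ℕ) < (l : ℕ) then a i j else 0 := by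
    intro i l
    have htele := tele (fun j => finrank F ↥(𝒱 i.castSucc ⊔ (𝒱 i.succ ⊓ 𝒱' j))) (a i)
      (fun j => by
        have hm : finrank F ↥(𝒱 i.castSucc ⊔ (𝒱 i.succ ⊓ 𝒱' j.castSucc))
            ≤ finrank F ↥(𝒱 i.castSucc ⊔ (𝒱 i.succ ⊓ 𝒱' j.succ)) :=
          Submodule.finrank_mono (hDmono i (Fin.castSucc_le_succ j))
        simp only [ha]
        omega) l
    have h0 : 𝒱 i.castSucc ⊔ (𝒱 i.succ ⊓ 𝒱' 0) = 𝒱 i.castSucc := by rw [h𝒱'0]; simp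
    have hsupinf := Submodule.finrank_sup_add_finrank_inf_eq (𝒱 i.castSucc) (𝒱 i.succ ⊓ 𝒱' l)
    have h3 : 𝒱 i.castSucc ⊓ (𝒱 i.succ ⊓ 𝒱' l) = 𝒱 i.castSucc ⊓ 𝒱' l := by
      rw [← inf_assoc, inf_eq_left.mpr (h𝒱 (Fin.castSucc_le_succ i))]
    rw [h3] at hsupinf
    have h00 : finrank F ↥(𝒱 i.castSucc ⊔ (𝒱 i.succ ⊓ 𝒱' 0)) = finrank F ↥(𝒱 i.castSucc) := by
      rw [h0]
    rw [h00] at htele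
    have htele' : finrank F ↥(𝒱 i.castSucc ⊔ (𝒱 i.succ ⊓ 𝒱' l))
        = finrank F ↥(𝒱 i.castSucc) + ∑ j : Fin n, if (j : ℕ) < (l : ℕ) then a i j else 0 :=
      htele
    omega
  have houter := tele (fun k => finrank F ↥(𝒱 k ⊓ 𝒱' l))
    (fun i => ∑ j : Fin n, if (j : ℕ) < (l : ℕ) then a i j else 0)
    (fun i => hstep i l) k
  rw [houter]
  rw [h𝒱0]
  rw [bot_inf_eq, finrank_bot, zero_add]

/-- Existence of the bigraded pieces `U i j` together with their dimension count. -/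
lemma exists_U (𝒱 : Fin (m + 1) → Submodule F V) (𝒱' : Fin (n + 1) → Submodule F V)
    (h𝒱' : Monotone 𝒱') (i : Fin m) (j : Fin n) :
    ∃ U : Submodule F V, U ≤ 𝒱 i.succ ⊓ 𝒱' j.succ
      ∧ (𝒱 i.castSucc ⊔ (𝒱 i.succ ⊓ 𝒱' j.castSucc)) ⊔ U
          = 𝒱 i.castSucc ⊔ (𝒱 i.succ ⊓ 𝒱' j.succ)
      ∧ finrank F ↥(𝒱 i.castSucc ⊔ (𝒱 i.succ ⊓ 𝒱' j.castSucc)) + finrank F ↥U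
          = finrank F ↥(𝒱 i.castSucc ⊔ (𝒱 i.succ ⊓ 𝒱' j.succ)) := by
  set Dc := 𝒱 i.castSucc ⊔ (𝒱 i.succ ⊓ 𝒱' j.castSucc) with hDc
  set A := 𝒱 i.succ ⊓ 𝒱' j.succ with hA
  obtain ⟨U, hUA, hdisj, hsupBU⟩ := aux_compl (inf_le_right : Dc ⊓ A ≤ A)
  have hXA : 𝒱 i.succ ⊓ 𝒱' j.castSucc ≤ A := inf_le_inf_left _ (h𝒱' (Fin.castSucc_le_succ j))
  have hsup : Dc ⊔ U = 𝒱 i.castSucc ⊔ (𝒱 i.succ ⊓ 𝒱' j.succ) := by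
    have h1 : Dc ⊔ U = Dc ⊔ (Dc ⊓ A ⊔ U) := by rw [← sup_assoc, sup_inf_self]
    rw [h1, hsupBU, hDc, sup_assoc, sup_eq_right.mpr hXA]
  have hDcU : Dc ⊓ U = ⊥ := by
    have hUA' : A ⊓ U = U := inf_eq_right.mpr hUA
    rw [← hUA', ← inf_assoc]
    exact disjoint_iff.mp hdisj
  have e := Submodule.finrank_sup_add_finrank_inf_eq Dc U
  rw [hDcU, hsup, finrank_bot, add_zero] at e
  exact ⟨U, hUA, hsup, e.symm⟩

/-- Glue linear equivalences along a family of subspaces that spans and whose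
dimensions add up to the whole dimension. -/
lemma glue {d : ℕ} (hd : finrank F V = d) {ι : Type} [Fintype ι] [DecidableEq ι]
    (W W' : ι → Submodule F V)
    (hr : ∀ p, finrank F ↥(W p) = finrank F ↥(W' p))
    (hsup : ⨆ p, W p = ⊤) (hsup' : ⨆ p, W' p = ⊤)
    (hsum : ∑ p, finrank F ↥(W p) = d) :
    ∃ g : V ≃ₗ[F] V, ∀ p, (W p).map (g : V →ₗ[F] V) = W' p := by
  classical
  have mkφ : ∀ (T : ι → Submodule F V), (⨆ p, T p = ⊤) →
      ∃ φ : ((p : ι) → ↥(T p)) →ₗ[F] V,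
        (∀ (p : ι) (u : ↥(T p)), φ (Pi.single p u) = ↑u) ∧ Function.Surjective φ := by
    intro T hT
    refine ⟨∑ p, (T p).subtype ∘ₗ LinearMap.proj p, ?_, ?_⟩
    case refine_1 =>
      intro p u
      simp only [LinearMap.sum_apply, LinearMap.comp_apply, LinearMap.proj_apply]
      rw [Finset.sum_eq_single p]
      · rw [Pi.single_eq_same]; rfl
      · intro q _ hq
        rw [Pi.single_eq_of_ne hq]
        simp
      · intro h; exact absurd (Finset.mem_univ p) h
    case refine_2 =>
      have hle : ⨆ p, T p ≤ LinearMap.range (∑ p, (T p).subtype ∘ₗ LinearMap.proj p) := by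
        refine iSup_le fun p x hx => ⟨Pi.single p ⟨x, hx⟩, ?_⟩
        simp only [LinearMap.sum_apply, LinearMap.comp_apply, LinearMap.proj_apply]
        rw [Finset.sum_eq_single p]
        · rw [Pi.single_eq_same]; rfl
        · intro q _ hq
          rw [Pi.single_eq_of_ne hq]
          simp
        · intro h; exact absurd (Finset.mem_univ p) h
      rw [← LinearMap.range_eq_top]
      exact top_unique (hT ▸ hle)
  obtain ⟨φ, φsingle, φsurj⟩ := mkφ W hsup
  obtain ⟨φ', φsingle', φsurj'⟩ := mkφ W' hsup'
  have hfr : finrank F ((p : ι) → ↥(W p)) = finrank F V := by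
    rw [Module.finrank_pi_fintype, hsum, hd]
  have hfr' : finrank F ((p : ι) → ↥(W' p)) = finrank F V := by
    rw [Module.finrank_pi_fintype, hd]
    rw [← hsum]
    exact Finset.sum_congr rfl fun p _ => (hr p).symm
  have φinj : Function.Injective φ :=
    (LinearMap.injective_iff_surjective_of_finrank_eq_finrank hfr).mpr φsurj
  have φinj' : Function.Injective φ' :=
    (LinearMap.injective_iff_surjective_of_finrank_eq_finrank hfr').mpr φsurj'
  set e : ((p : ι) → ↥(W p)) ≃ₗ[F] V := LinearEquiv.ofBijective φ ⟨φinj, φsurj⟩ with he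
  set e' : ((p : ι) → ↥(W' p)) ≃ₗ[F] V := LinearEquiv.ofBijective φ' ⟨φinj', φsurj'⟩ with he'
  have eps : ∀ p, ↥(W p) ≃ₗ[F] ↥(W' p) := fun p =>
    Classical.choice (FiniteDimensional.nonempty_linearEquiv_of_finrank_eq (hr p))
  set mid : ((p : ι) → ↥(W p)) ≃ₗ[F] ((p : ι) → ↥(W' p)) := LinearEquiv.piCongrRight eps
    with hmid
  refine ⟨(e.symm.trans mid).trans e', fun p => ?_⟩
  set g : V ≃ₗ[F] V := (e.symm.trans mid).trans e' with hg
  have le1 : (W p).map (g : V →ₗ[F] V) ≤ W' p := by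
    rintro _ ⟨x, hx, rfl⟩
    have hex : e (Pi.single p ⟨x, hx⟩) = x := φsingle p ⟨x, hx⟩
    have hsymm : e.symm x = Pi.single p ⟨x, hx⟩ := by
      rw [LinearEquiv.symm_apply_eq]
      exact hex.symm
    have hmids : mid (Pi.single p ⟨x, hx⟩) = Pi.single p (eps p ⟨x, hx⟩) := by
      funext q
      rw [hmid, LinearEquiv.piCongrRight_apply]
      by_cases hq : q = p
      · subst hq; rw [Pi.single_eq_same, Pi.single_eq_same]
      · rw [Pi.single_eq_of_ne hq, Pi.single_eq_of_ne hq, map_zero]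
    have : (g : V →ₗ[F] V) x = φ' (Pi.single p (eps p ⟨x, hx⟩)) := by
      show g x = _
      rw [hg, LinearEquiv.trans_apply, LinearEquiv.trans_apply, hsymm, hmids]
      rfl
    rw [this, φsingle' p (eps p ⟨x, hx⟩)]
    exact (eps p ⟨x, hx⟩).2
  refine Submodule.eq_of_le_of_finrank_eq le1 ?_
  rw [LinearEquiv.finrank_map_eq]
  exact hr p

end FlagAux

/-- `GL(V)`-orbits on pairs of flags: two pairs of an `m`-step and an `n`-step flag are
in the same diagonal `GL(V)`-orbit iff all intersection dimensions agree; consequently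
the orbits are classified by the matrices
`a_{ij} = dim (V_{i-1} + V_i ∩ V'_j) - dim (V_{i-1} + V_i ∩ V'_{j-1})` in `Θ_{m|n,d}`. -/
theorem stmt7 (F V : Type) [Field F] [AddCommGroup V] [Module F V]
    [FiniteDimensional F V] (d m n : ℕ) (hd : finrank F V = d)
    (𝒱 𝒲 : Fin (m + 1) → Submodule F V) (𝒱' 𝒲' : Fin (n + 1) → Submodule F V)
    (h𝒱 : Monotone 𝒱) (h𝒱0 : 𝒱 0 = ⊥) (h𝒱t : 𝒱 (Fin.last m) = ⊤)
    (h𝒲 : Monotone 𝒲) (h𝒲0 : 𝒲 0 = ⊥) (h𝒲t : 𝒲 (Fin.last m) = ⊤)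
    (h𝒱' : Monotone 𝒱') (h𝒱'0 : 𝒱' 0 = ⊥) (h𝒱't : 𝒱' (Fin.last n) = ⊤)
    (h𝒲' : Monotone 𝒲') (h𝒲'0 : 𝒲' 0 = ⊥) (h𝒲't : 𝒲' (Fin.last n) = ⊤) :
    ((∃ g : V ≃ₗ[F] V,
        (∀ i, (𝒱 i).map (g : V →ₗ[F] V) = 𝒲 i) ∧
        (∀ j, (𝒱' j).map (g : V →ₗ[F] V) = 𝒲' j)) ↔
      (∀ i j, finrank F ↥(𝒱 i ⊓ 𝒱' j) = finrank F ↥(𝒲 i ⊓ 𝒲' j)))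
    ∧
    ((∃ g : V ≃ₗ[F] V,
        (∀ i, (𝒱 i).map (g : V →ₗ[F] V) = 𝒲 i) ∧
        (∀ j, (𝒱' j).map (g : V →ₗ[F] V) = 𝒲' j)) ↔
      (∀ (i : Fin m) (j : Fin n),
        finrank F ↥(𝒱 i.castSucc ⊔ (𝒱 i.succ ⊓ 𝒱' j.succ))
          - finrank F ↥(𝒱 i.castSucc ⊔ (𝒱 i.succ ⊓ 𝒱' j.castSucc))
        = finrank F ↥(𝒲 i.castSucc ⊔ (𝒲 i.succ ⊓ 𝒲' j.succ))
          - finrank F ↥(𝒲 i.castSucc ⊔ (𝒲 i.succ ⊓ 𝒲' j.castSucc)))) := by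
  classical
  -- the easy direction: a common linear automorphism preserves intersection dimensions
  have easy : (∃ g : V ≃ₗ[F] V,
        (∀ i, (𝒱 i).map (g : V →ₗ[F] V) = 𝒲 i) ∧
        (∀ j, (𝒱' j).map (g : V →ₗ[F] V) = 𝒲' j)) →
      ∀ i j, finrank F ↥(𝒱 i ⊓ 𝒱' j) = finrank F ↥(𝒲 i ⊓ 𝒲' j) := by
    rintro ⟨g, hg, hg'⟩ i j
    have hmap : (𝒱 i ⊓ 𝒱' j).map (g : V →ₗ[F] V) = 𝒲 i ⊓ 𝒲' j := by
      rw [Submodule.map_inf (g : V →ₗ[F] V) g.injective, hg i, hg' j]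
    rw [← hmap, LinearEquiv.finrank_map_eq]
  -- equal intersection dimensions give equal dimensions of the chain pieces
  have stepA : (∀ i j, finrank F ↥(𝒱 i ⊓ 𝒱' j) = finrank F ↥(𝒲 i ⊓ 𝒲' j)) →
      ∀ (i : Fin m) (j : Fin (n + 1)),
        finrank F ↥(𝒱 i.castSucc ⊔ (𝒱 i.succ ⊓ 𝒱' j))
          = finrank F ↥(𝒲 i.castSucc ⊔ (𝒲 i.succ ⊓ 𝒲' j)) := by
    intro hdim i j
    have hVW : ∀ i : Fin (m + 1), finrank F ↥(𝒱 i) = finrank F ↥(𝒲 i) := by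
      intro i
      have h1 := hdim i (Fin.last n)
      rw [h𝒱't, h𝒲't, inf_top_eq, inf_top_eq] at h1
      exact h1
    have e1 := Submodule.finrank_sup_add_finrank_inf_eq (𝒱 i.castSucc) (𝒱 i.succ ⊓ 𝒱' j)
    have e2 := Submodule.finrank_sup_add_finrank_inf_eq (𝒲 i.castSucc) (𝒲 i.succ ⊓ 𝒲' j)
    have i1 : 𝒱 i.castSucc ⊓ (𝒱 i.succ ⊓ 𝒱' j) = 𝒱 i.castSucc ⊓ 𝒱' j := by
      rw [← inf_assoc, inf_eq_left.mpr (h𝒱 (Fin.castSucc_le_succ i))]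
    have i2 : 𝒲 i.castSucc ⊓ (𝒲 i.succ ⊓ 𝒲' j) = 𝒲 i.castSucc ⊓ 𝒲' j := by
      rw [← inf_assoc, inf_eq_left.mpr (h𝒲 (Fin.castSucc_le_succ i))]
    rw [i1] at e1
    rw [i2] at e2
    have d1 := hdim i.castSucc j
    have d2 := hdim i.succ j
    have d3 := hVW i.castSucc
    omega
  -- the hard direction
  have hard : (∀ i j, finrank F ↥(𝒱 i ⊓ 𝒱' j) = finrank F ↥(𝒲 i ⊓ 𝒲' j)) →
      (∃ g : V ≃ₗ[F] V,
        (∀ i, (𝒱 i).map (g : V →ₗ[F] V) = 𝒲 i) ∧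
        (∀ j, (𝒱' j).map (g : V →ₗ[F] V) = 𝒲' j)) := by
    intro hdim
    have hD := stepA hdim
    choose UV hUV1 hUV2 hUV3 using fun (i : Fin m) (j : Fin n) => exists_U 𝒱 𝒱' h𝒱' i j
    choose UW hUW1 hUW2 hUW3 using fun (i : Fin m) (j : Fin n) => exists_U 𝒲 𝒲' h𝒲' i j
    have hrankU : ∀ i j, finrank F ↥(UV i j) = finrank F ↥(UW i j) := by
      intro i j
      have h1 := hUV3 i j
      have h2 := hUW3 i j
      have h3 := hD i j.castSucc
      have h4 := hD i j.succ
      omega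
    have hsupV := master_sup 𝒱 𝒱' h𝒱 h𝒱' h𝒱0 h𝒱'0 UV hUV1 hUV2
    have hsupW := master_sup 𝒲 𝒲' h𝒲 h𝒲' h𝒲0 h𝒲'0 UW hUW1 hUW2
    have htop : ∀ (U : Fin m → Fin n → Submodule F V),
        ((⊤ : Submodule F V) = ⨆ i : Fin m, ⨆ _ : (i : ℕ) < ((Fin.last m : Fin (m+1)) : ℕ),
          ⨆ j : Fin n, ⨆ _ : (j : ℕ) < ((Fin.last n : Fin (n+1)) : ℕ), U i j) →
        (⨆ p : Fin m × Fin n, U p.1 p.2) = ⊤ := by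
      intro U hU
      rw [iSup_prod]
      apply le_antisymm le_top
      rw [hU]
      exact iSup_le fun i => iSup_le fun _ => iSup_le fun j => iSup_le fun _ =>
        le_iSup₂ (f := fun i j => U i j) i j
    have htopV : (⨆ p : Fin m × Fin n, UV p.1 p.2) = ⊤ := by
      refine htop UV ?_
      have := hsupV (Fin.last m) (Fin.last n)
      rw [h𝒱t, h𝒱't, top_inf_eq] at this
      exact this
    have htopW : (⨆ p : Fin m × Fin n, UW p.1 p.2) = ⊤ := by
      refine htop UW ?_
      have := hsupW (Fin.last m) (Fin.last n)
      rw [h𝒲t, h𝒲't, top_inf_eq] at this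
      exact this
    have hsumV : ∑ p : Fin m × Fin n, finrank F ↥(UV p.1 p.2) = d := by
      have hm := master_dim 𝒱 𝒱' h𝒱 h𝒱' h𝒱0 h𝒱'0 (Fin.last m) (Fin.last n)
      rw [h𝒱t, h𝒱't, top_inf_eq, finrank_top] at hm
      have hmain : ∑ i : Fin m, ∑ j : Fin n, finrank F ↥(UV i j) = finrank F V := by
        rw [hm]
        refine Finset.sum_congr rfl fun i _ => ?_
        rw [if_pos (show (i : ℕ) < ((Fin.last m : Fin (m+1)) : ℕ) by
          simpa [Fin.val_last] using i.is_lt)]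
        refine Finset.sum_congr rfl fun j _ => ?_
        rw [if_pos (show (j : ℕ) < ((Fin.last n : Fin (n+1)) : ℕ) by
          simpa [Fin.val_last] using j.is_lt)]
        have := hUV3 i j
        omega
      rw [Fintype.sum_prod_type, hmain, hd]
    obtain ⟨g, hgU⟩ := glue hd (fun p : Fin m × Fin n => UV p.1 p.2)
      (fun p => UW p.1 p.2) (fun p => hrankU p.1 p.2) htopV htopW hsumV
    refine ⟨g, fun k => ?_, fun l => ?_⟩
    · have h1 := hsupV k (Fin.last n)
      rw [h𝒱't, inf_top_eq] at h1
      have h2 := hsupW k (Fin.last n)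
      rw [h𝒲't, inf_top_eq] at h2
      rw [h1, h2]
      simp_rw [Submodule.map_iSup]
      exact iSup_congr fun i => iSup_congr fun _ => iSup_congr fun j =>
        iSup_congr fun _ => hgU (i, j)
    · have h1 := hsupV (Fin.last m) l
      rw [h𝒱t, top_inf_eq] at h1
      have h2 := hsupW (Fin.last m) l
      rw [h𝒲t, top_inf_eq] at h2
      rw [h1, h2]
      simp_rw [Submodule.map_iSup]
      exact iSup_congr fun i => iSup_congr fun _ => iSup_congr fun j =>
        iSup_congr fun _ => hgU (i, j)
  refine ⟨⟨easy, hard⟩, ⟨fun hg i j => ?_, fun hmat => hard fun k l => ?_⟩⟩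
  · have hdim := easy hg
    rw [stepA hdim i j.succ, stepA hdim i j.castSucc]
  · have hv := master_dim 𝒱 𝒱' h𝒱 h𝒱' h𝒱0 h𝒱'0 k l
    have hw := master_dim 𝒲 𝒲' h𝒲 h𝒲' h𝒲0 h𝒲'0 k l
    rw [hv, hw]
    refine Finset.sum_congr rfl fun i _ => ?_
    split_ifs with h
    · refine Finset.sum_congr rfl fun j _ => ?_
      split_ifs with h2
      · exact hmat i j
      · rfl
    · rfl
end

section
/- In the quantum group $U_q(\mathfrak{gl}_N)$ with $N = 2n+1$ (indices as in the paper), define $e_i = E_{i+1/2} + K_{i+1/2}^{-1} F_{-(i+1/2)}$, $f_i = E_{-(i+1/2)} + F_{i+1/2} K_{-(i+1/2)}^{-1}$ for $0 \le i < n$. Then the comultiplication satisfies $\Delta(e_i) = e_i \otimes K_{i+1/2}^{-1} + 1 \otimes E_{i+1/2} + k_i^{-1} \otimes K_{i+1/2}^{-1} F_{-(i+1/2)}$ and $\Delta(f_i) = f_i \otimes K_{-(i+1/2)}^{-1} + 1 \otimes E_{-(i+1/2)} + k_i \otimes F_{i+1/2} K_{-(i+1/2)}^{-1}$, where $k_i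 = K_{i+1/2} K_{-(i+1/2)}^{-1}$. In particular $\Delta(e_i), \Delta(f_i) \in U^\jmath \otimes U_q(\mathfrak{gl}_N)$ where $U^\jmath$ is the subalgebra generated by the $e_i, f_i$ and the $d_j^{\pm 1}$, so $U^\jmath$ is a right coideal subalgebra. -/
open TensorProduct

/-- Comultiplication formulas for the ıquantum group generators
`e = E + K⁻¹F'`, `f = E' + F K'⁻¹` of type AIV inside `U_q(gl_N)`:
`Δ(e) = e ⊗ K⁻¹ + 1 ⊗ E + k⁻¹ ⊗ K⁻¹F'` and
`Δ(f) = f ⊗ K'⁻¹ + 1 ⊗ E' + k ⊗ F K'⁻¹`, where `k = K K'⁻¹`, `k⁻¹ = K⁻¹ K'`;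
in particular `Δ(e)` and `Δ(f)` lie in `U^ȷ ⊗ U`, so `U^ȷ` is a right coideal. -/
theorem stmt18 (R A : Type) [CommRing R] [Ring A] [Algebra R A]
    (Δ : A →ₐ[R] TensorProduct R A A)
    (E E' F F' K K' Ki K'i : A)
    (hK : K * Ki = 1) (hK2 : Ki * K = 1) (hK' : K' * K'i = 1) (hK'2 : K'i * K' = 1)
    (hΔE : Δ E = E ⊗ₜ[R] Ki + 1 ⊗ₜ[R] E)
    (hΔE' : Δ E' = E' ⊗ₜ[R] K'i + 1 ⊗ₜ[R] E')
    (hΔF : Δ F = F ⊗ₜ[R] 1 + K ⊗ₜ[R] F)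
    (hΔF' : Δ F' = F' ⊗ₜ[R] 1 + K' ⊗ₜ[R] F')
    (hΔKi : Δ Ki = Ki ⊗ₜ[R] Ki) (hΔK'i : Δ K'i = K'i ⊗ₜ[R] K'i) :
    Δ (E + Ki * F')
        = (E + Ki * F') ⊗ₜ[R] Ki + 1 ⊗ₜ[R] E + (Ki * K') ⊗ₜ[R] (Ki * F')
    ∧ Δ (E' + F * K'i)
        = (E' + F * K'i) ⊗ₜ[R] K'i + 1 ⊗ₜ[R] E' + (K * K'i) ⊗ₜ[R] (F * K'i)
    ∧ Δ (E + Ki * F') ∈ LinearMap.range (TensorProduct.map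
        ((Algebra.adjoin R {E + Ki * F', E' + F * K'i, K * K'i, Ki * K'}).val.toLinearMap)
        (LinearMap.id (R := R) (M := A)))
    ∧ Δ (E' + F * K'i) ∈ LinearMap.range (TensorProduct.map
        ((Algebra.adjoin R {E + Ki * F', E' + F * K'i, K * K'i, Ki * K'}).val.toLinearMap)
        (LinearMap.id (R := R) (M := A))) := by
  have he : Δ (E + Ki * F')
      = (E + Ki * F') ⊗ₜ[R] Ki + 1 ⊗ₜ[R] E + (Ki * K') ⊗ₜ[R] (Ki * F') := by
    rw [map_add, map_mul, hΔE, hΔKi, hΔF', mul_add,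
      Algebra.TensorProduct.tmul_mul_tmul, Algebra.TensorProduct.tmul_mul_tmul,
      mul_one, add_tmul]
    abel
  have hf : Δ (E' + F * K'i)
      = (E' + F * K'i) ⊗ₜ[R] K'i + 1 ⊗ₜ[R] E' + (K * K'i) ⊗ₜ[R] (F * K'i) := by
    rw [map_add, map_mul, hΔE', hΔK'i, hΔF, add_mul,
      Algebra.TensorProduct.tmul_mul_tmul, Algebra.TensorProduct.tmul_mul_tmul,
      one_mul, add_tmul]
    abel
  set S := Algebra.adjoin R {E + Ki * F', E' + F * K'i, K * K'i, Ki * K'} with hS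
  have m1 : E + Ki * F' ∈ S := Algebra.subset_adjoin (by simp)
  have m2 : E' + F * K'i ∈ S := Algebra.subset_adjoin (by simp)
  have m3 : K * K'i ∈ S := Algebra.subset_adjoin (by simp)
  have m4 : Ki * K' ∈ S := Algebra.subset_adjoin (by simp)
  refine ⟨he, hf, ?_, ?_⟩
  · refine ⟨(⟨E + Ki * F', m1⟩ : S) ⊗ₜ[R] Ki + 1 ⊗ₜ[R] E
      + (⟨Ki * K', m4⟩ : S) ⊗ₜ[R] (Ki * F'), ?_⟩
    simp [he, TensorProduct.map_tmul]
  · refine ⟨(⟨E' + F * K'i, m2⟩ : S) ⊗ₜ[R] K'i + 1 ⊗ₜ[R] E'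
      + (⟨K * K'i, m3⟩ : S) ⊗ₜ[R] (F * K'i), ?_⟩
    simp [hf, TensorProduct.map_tmul]
end
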